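/- arXiv:1111.2417 — 2 statements merged into one kernel-verified Lean document; each statement's English description precedes it below -/
import Mathlib

section
/- The groups Λ_{k,i}, for k a positive integer and i ∈ {0, π, π/2}, are pairwise non-isomorphic: if (k,i) ≠ (p,j) then there is no group isomorphism between Λ_{k,i} and Λ_{p,j}. -/
open Real

/-- The real 3-dimensional Heisenberg group, as `ℝ³` with the multiplication
`(x,y,z)·(x',y',z') = (x+x', y+y', z+z'+ (xy'-x'y)/2)`. -/
@[ext] structure Heis : Type where
  x : ℝ
  y : ℝ
  z : ℝ

namespace Heis

noncomputable instance : Mul Heis :=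
  ⟨fun a b => ⟨a.x + b.x, a.y + b.y, a.z + b.z + (a.x * b.y - b.x * a.y) / 2⟩⟩

instance : One Heis := ⟨⟨0, 0, 0⟩⟩

instance : Inv Heis := ⟨fun a => ⟨-a.x, -a.y, -a.z⟩⟩

@[simp] lemma mul_x (a b : Heis) : (a * b).x = a.x + b.x := rfl
@[simp] lemma mul_y (a b : Heis) : (a * b).y = a.y + b.y := rfl
@[simp] lemma mul_z (a b : Heis) :
    (a * b).z = a.z + b.z + (a.x * b.y - b.x * a.y) / 2 := rfl
@[simp] lemma one_x : (1 : Heis).x = 0 := rfl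
@[simp] lemma one_y : (1 : Heis).y = 0 := rfl
@[simp] lemma one_z : (1 : Heis).z = 0 := rfl
@[simp] lemma inv_x (a : Heis) : a⁻¹.x = -a.x := rfl
@[simp] lemma inv_y (a : Heis) : a⁻¹.y = -a.y := rfl
@[simp] lemma inv_z (a : Heis) : a⁻¹.z = -a.z := rfl

noncomputable instance : Group Heis where
  mul_assoc a b c := by ext <;> simp <;> ring
  one_mul a := by ext <;> simp
  mul_one a := by ext <;> simp
  inv_mul_cancel a := by ext <;> simp

end Heis

/-- The rotation action `α(t)` of `ℝ` on the Heisenberg group. -/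
noncomputable def alphaMap (t : ℝ) (v : Heis) : Heis :=
  ⟨v.x * cos t + v.y * sin t, -v.x * sin t + v.y * cos t, v.z⟩

@[simp] lemma alphaMap_x (t : ℝ) (v : Heis) :
    (alphaMap t v).x = v.x * cos t + v.y * sin t := rfl
@[simp] lemma alphaMap_y (t : ℝ) (v : Heis) :
    (alphaMap t v).y = -v.x * sin t + v.y * cos t := rfl
@[simp] lemma alphaMap_z (t : ℝ) (v : Heis) : (alphaMap t v).z = v.z := rfl

/-- The oscillator group `G = ℝ ⋉_α H₃(ℝ)`. -/
@[ext] structure Osc : Type where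
  t : ℝ
  v : Heis

namespace Osc

noncomputable instance : Mul Osc := ⟨fun a b => ⟨a.t + b.t, a.v * alphaMap a.t b.v⟩⟩
instance : One Osc := ⟨⟨0, 1⟩⟩
noncomputable instance : Inv Osc := ⟨fun a => ⟨-a.t, alphaMap (-a.t) a.v⁻¹⟩⟩

@[simp] lemma mul_t (a b : Osc) : (a * b).t = a.t + b.t := rfl
@[simp] lemma mul_v (a b : Osc) : (a * b).v = a.v * alphaMap a.t b.v := rfl
@[simp] lemma one_t : (1 : Osc).t = 0 := rfl
@[simp] lemma one_v : (1 : Osc).v = 1 := rfl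
@[simp] lemma inv_t (a : Osc) : a⁻¹.t = -a.t := rfl
@[simp] lemma inv_v (a : Osc) : a⁻¹.v = alphaMap (-a.t) a.v⁻¹ := rfl

lemma alphaMap_one (t : ℝ) : alphaMap t (1 : Heis) = 1 := by
  ext <;> simp

lemma alphaMap_mul (t : ℝ) (v w : Heis) :
    alphaMap t (v * w) = alphaMap t v * alphaMap t w := by
  ext
  · simp; ring
  · simp; ring
  · simp
    linear_combination (w.x * v.y - v.x * w.y) * (sin_sq_add_cos_sq t)

lemma alphaMap_add (s t : ℝ) (v : Heis) :
    alphaMap (s + t) v = alphaMap s (alphaMap t v) := by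
  ext <;> simp [cos_add, sin_add] <;> ring

lemma alphaMap_zero (v : Heis) : alphaMap 0 v = v := by
  ext <;> simp

noncomputable instance : Group Osc where
  mul_assoc a b c := by
    refine Osc.ext (by simp; ring) ?_
    simp only [Osc.mul_v, Osc.mul_t, alphaMap_mul, ← alphaMap_add]
    rw [mul_assoc]
  one_mul a := Osc.ext (by simp) (by simp [alphaMap_zero])
  mul_one a := Osc.ext (by simp) (by simp [alphaMap_one])
  inv_mul_cancel a := by
    refine Osc.ext (by simp) ?_
    simp only [Osc.mul_v, Osc.inv_v, Osc.inv_t, Osc.one_v]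
    rw [← alphaMap_mul, inv_mul_cancel, alphaMap_one]

end Osc

/-- `Heis` carries the standard topology of `ℝ³`. -/
noncomputable instance : TopologicalSpace Heis :=
  TopologicalSpace.induced (fun v => (v.x, v.y, v.z)) inferInstance

/-- `Osc` carries the standard topology of `ℝ⁴`. -/
noncomputable instance : TopologicalSpace Osc :=
  TopologicalSpace.induced (fun g => (g.t, g.v.x, g.v.y, g.v.z)) inferInstance

lemma cos_sin_int (n : ℤ) :
    ∃ a b : ℤ, cos (π / 2 * n) = a ∧ sin (π / 2 * n) = b := by
  induction n using Int.induction_on with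
  | zero => exact ⟨1, 0, by simp, by simp⟩
  | succ n ih =>
    obtain ⟨a, b, ha, hb⟩ := ih
    have h : (((n : ℤ) + 1 : ℤ) : ℝ) = ((n : ℤ) : ℝ) + 1 := by push_cast; ring
    refine ⟨-b, a, ?_, ?_⟩
    · rw [h, mul_add, mul_one, cos_add, ha, hb]
      push_cast
      simp
    · rw [h, mul_add, mul_one, sin_add, ha, hb]
      simp
  | pred n ih =>
    obtain ⟨a, b, ha, hb⟩ := ih
    have h : ((-(n : ℤ) - 1 : ℤ) : ℝ) = ((-(n : ℤ) : ℤ) : ℝ) - 1 := by push_cast; ring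
    refine ⟨b, -a, ?_, ?_⟩
    · rw [h, mul_sub, mul_one, cos_sub, ha, hb]
      simp
    · rw [h, mul_sub, mul_one, sin_sub, ha, hb]
      push_cast
      simp

lemma cos_sin_int' (t : ℝ) (h : ∃ j : ℤ, t = π / 2 * j) :
    ∃ a b : ℤ, cos t = a ∧ sin t = b := by
  obtain ⟨j, rfl⟩ := h
  exact cos_sin_int j

/-- The lattice `θℤ ⋉ Γ_k` in the oscillator group, for `θ` an integer multiple of `π/2`. -/
noncomputable def LamTheta (k : ℕ+) (θ : ℝ) (m : ℤ) (hθ : θ = π / 2 * m) : Subgroup Osc where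
  carrier := {g | (∃ n : ℤ, g.t = θ * n) ∧ (∃ a : ℤ, g.v.x = a) ∧ (∃ b : ℤ, g.v.y = b) ∧
    (∃ c : ℤ, g.v.z = (c : ℝ) / (2 * ((k : ℕ) : ℝ)))}
  one_mem' := ⟨⟨0, by simp⟩, ⟨0, by simp⟩, ⟨0, by simp⟩, ⟨0, by simp⟩⟩
  mul_mem' := by
    rintro g h ⟨⟨n₁, hn₁⟩, ⟨a₁, ha₁⟩, ⟨b₁, hb₁⟩, ⟨c₁, hc₁⟩⟩
      ⟨⟨n₂, hn₂⟩, ⟨a₂, ha₂⟩, ⟨b₂, hb₂⟩, ⟨c₂, hc₂⟩⟩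
    obtain ⟨A, B, hA, hB⟩ := cos_sin_int' g.t ⟨m * n₁, by rw [hn₁, hθ]; push_cast; ring⟩
    have hk : ((k : ℕ) : ℝ) ≠ 0 := by
      exact_mod_cast k.ne_zero
    refine ⟨⟨n₁ + n₂, ?_⟩, ⟨a₁ + (a₂ * A + b₂ * B), ?_⟩, ⟨b₁ + (-(a₂ * B) + b₂ * A), ?_⟩,
      ⟨c₁ + c₂ + (k : ℕ) * (a₁ * (-(a₂ * B) + b₂ * A) - (a₂ * A + b₂ * B) * b₁), ?_⟩⟩
    · simp only [Osc.mul_t, hn₁, hn₂]; push_cast; ring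
    · simp only [Osc.mul_v, Heis.mul_x, alphaMap_x, ha₁, ha₂, hb₂, hA, hB]; push_cast; ring
    · simp only [Osc.mul_v, Heis.mul_y, alphaMap_y, hb₁, ha₂, hb₂, hA, hB]; push_cast; ring
    · simp only [Osc.mul_v, Heis.mul_z, alphaMap_x, alphaMap_y, alphaMap_z,
        ha₁, hb₁, ha₂, hb₂, hc₁, hc₂, hA, hB]
      field_simp
      push_cast
      ring
  inv_mem' := by
    rintro g ⟨⟨n₁, hn₁⟩, ⟨a₁, ha₁⟩, ⟨b₁, hb₁⟩, ⟨c₁, hc₁⟩⟩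
    obtain ⟨A, B, hA, hB⟩ := cos_sin_int' g.t ⟨m * n₁, by rw [hn₁, hθ]; push_cast; ring⟩
    refine ⟨⟨-n₁, ?_⟩, ⟨-(a₁ * A) + b₁ * B, ?_⟩, ⟨-(a₁ * B) - b₁ * A, ?_⟩, ⟨-c₁, ?_⟩⟩
    · simp only [Osc.inv_t, hn₁]; push_cast; ring
    · simp only [Osc.inv_v, alphaMap_x, Heis.inv_x, Heis.inv_y, cos_neg, sin_neg,
        ha₁, hb₁, hA, hB]
      push_cast; ring
    · simp only [Osc.inv_v, alphaMap_y, Heis.inv_x, Heis.inv_y, cos_neg, sin_neg,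
        ha₁, hb₁, hA, hB]
      push_cast; ring
    · simp only [Osc.inv_v, alphaMap_z, Heis.inv_z, hc₁]
      push_cast; ring

/-- The lattice `Λ_{k,0} = 2πℤ × Γ_k`. -/
noncomputable def Lam0 (k : ℕ+) : Subgroup Osc :=
  LamTheta k (2 * π) 4 (by push_cast; ring)

/-- The lattice `Λ_{k,π} = πℤ × Γ_k`. -/
noncomputable def LamPi (k : ℕ+) : Subgroup Osc :=
  LamTheta k π 2 (by push_cast; ring)

/-- The lattice `Λ_{k,π/2} = (π/2)ℤ × Γ_k`. -/
noncomputable def LamPi2 (k : ℕ+) : Subgroup Osc :=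
  LamTheta k (π / 2) 1 (by push_cast; ring)

/-- The lattice `Γ_k = ℤ × ℤ × (1/(2k))ℤ` in the Heisenberg group. -/
noncomputable def Gamma (k : ℕ+) : Subgroup Heis where
  carrier := {v | (∃ a : ℤ, v.x = a) ∧ (∃ b : ℤ, v.y = b) ∧
    (∃ c : ℤ, v.z = (c : ℝ) / (2 * ((k : ℕ) : ℝ)))}
  one_mem' := ⟨⟨0, by simp⟩, ⟨0, by simp⟩, ⟨0, by simp⟩⟩
  mul_mem' := by
    rintro v w ⟨⟨a₁, ha₁⟩, ⟨b₁, hb₁⟩, ⟨c₁, hc₁⟩⟩ ⟨⟨a₂, ha₂⟩, ⟨b₂, hb₂⟩, ⟨c₂, hc₂⟩⟩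
    have hk : ((k : ℕ) : ℝ) ≠ 0 := by exact_mod_cast k.ne_zero
    refine ⟨⟨a₁ + a₂, ?_⟩, ⟨b₁ + b₂, ?_⟩, ⟨c₁ + c₂ + (k : ℕ) * (a₁ * b₂ - a₂ * b₁), ?_⟩⟩
    · simp [ha₁, ha₂]
    · simp [hb₁, hb₂]
    · simp only [Heis.mul_z, ha₁, hb₁, ha₂, hb₂, hc₁, hc₂]
      field_simp
      push_cast
      ring
  inv_mem' := by
    rintro v ⟨⟨a₁, ha₁⟩, ⟨b₁, hb₁⟩, ⟨c₁, hc₁⟩⟩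
    refine ⟨⟨-a₁, by simp [ha₁]⟩, ⟨-b₁, by simp [hb₁]⟩, ⟨-c₁, ?_⟩⟩
    simp only [Heis.inv_z, hc₁]
    push_cast
    ring

/-- The subset `pℤ × qℤ × rℤ × sℤ` of the oscillator group. -/
def prodSet (p q r s : ℝ) : Set Osc :=
  {g | (∃ n : ℤ, g.t = p * n) ∧ (∃ n : ℤ, g.v.x = q * n) ∧
    (∃ n : ℤ, g.v.y = r * n) ∧ (∃ n : ℤ, g.v.z = s * n)}

/-!
Two kinds of group-theoretic invariants separate the lattices `Λ = LamTheta k θ m hθ`.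

For `n ≥ 1`, commutators of `n`-th powers in `Λ` are central exactly when `cos (nθ) = 1`; taking
`n = 1, 2` tells `θ = 2π, π, π/2` apart.

The level `k` is read off the center. After a central translation of its `z`-coordinate, every
element of `Λ` lies in `(π/2)ℤ ⋉ H₃(ℤ)`, so a commutator with vanishing `x`-coordinate has
integral `z`-coordinate. Hence if a power `u ^ N` of a primitive central element `u` (so
`u = (0, 0, 0, ±1/(2k))`) is a nontrivial commutator, then `2k ∣ N`; and `N = 2k` occurs, since
`(0, 0, 0, 1/(2k)) ^ (2k) = ⁅X, Y⁆`.
-/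

open scoped commutatorElement

theorem commutatorElement_mul_mul_of_mem_center {G : Type*} [Group G] (g h : G) {c d : G}
    (hc : c ∈ Subgroup.center G) (hd : d ∈ Subgroup.center G) : ⁅g * c, h * d⁆ = ⁅g, h⁆ := by
  have hc' (x : G) : c * x * c⁻¹ = x := mul_inv_eq_of_eq_mul (Subgroup.mem_center_iff.mp hc x).symm
  have hd' (x : G) : d * x * d⁻¹ = x := mul_inv_eq_of_eq_mul (Subgroup.mem_center_iff.mp hd x).symm
  calc ⁅g * c, h * d⁆ = g * (c * (h * d) * c⁻¹) * g⁻¹ * (h * d)⁻¹ := by group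
    _ = g * h * (d * g⁻¹ * d⁻¹) * h⁻¹ := by rw [hc']; group
    _ = ⁅g, h⁆ := by rw [hd', commutatorElement_def]

@[simp, norm_cast]
theorem Subgroup.coe_commutatorElement {G : Type*} [Group G] {H : Subgroup G} (x y : H) :
    ((⁅x, y⁆ : H) : G) = ⁅(x : G), (y : G)⁆ :=
  rfl

theorem Subgroup.mem_center_of_mem_center {G : Type*} [Group G] {H : Subgroup G} {x : H}
    (hx : (x : G) ∈ Subgroup.center G) : x ∈ Subgroup.center H :=
  Subgroup.mem_center_iff.mpr fun g => Subtype.ext (Subgroup.mem_center_iff.mp hx g)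

section Invariants

variable {G H : Type*} [Group G] [Group H]

variable (G) in
def PowCommutatorsCentral (n : ℕ) : Prop :=
  ∀ g h : G, ⁅g ^ n, h ^ n⁆ ∈ Subgroup.center G

theorem PowCommutatorsCentral.of_mulEquiv {n : ℕ} (e : G ≃* H) (hG : PowCommutatorsCentral G n) :
    PowCommutatorsCentral H n := fun g h => by
  have := MulEquivClass.apply_mem_center e (hG (e.symm g) (e.symm h))
  rwa [map_commutatorElement, map_pow, map_pow, e.apply_symm_apply, e.apply_symm_apply] at this

theorem powCommutatorsCentral_congr (e : G ≃* H) (n : ℕ) :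
    PowCommutatorsCentral G n ↔ PowCommutatorsCentral H n :=
  ⟨.of_mulEquiv e, .of_mulEquiv e.symm⟩

def IsPrimitiveCentral (u : G) : Prop :=
  u ∈ Subgroup.center G ∧ ∀ w ∈ Subgroup.center G, ∀ m : ℕ, 2 ≤ m → w ^ m ≠ u

theorem IsPrimitiveCentral.map {u : G} (hu : IsPrimitiveCentral u) (e : G ≃* H) :
    IsPrimitiveCentral (e u) := by
  refine ⟨MulEquivClass.apply_mem_center e hu.1, fun w hw m hm hwm => hu.2 (e.symm w) ?_ m hm ?_⟩
  · exact MulEquivClass.apply_mem_center e.symm hw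
  · rw [← map_pow, hwm, MulEquiv.symm_apply_apply]

variable (G) in
def HasPrimitiveCentralPowCommutator (N : ℕ) : Prop :=
  ∃ u : G, IsPrimitiveCentral u ∧ u ^ N ≠ 1 ∧ ∃ g h : G, ⁅g, h⁆ = u ^ N

theorem HasPrimitiveCentralPowCommutator.of_mulEquiv {N : ℕ} (e : G ≃* H)
    (hG : HasPrimitiveCentralPowCommutator G N) : HasPrimitiveCentralPowCommutator H N := by
  obtain ⟨u, hu, hne, g, h, hgh⟩ := hG
  refine ⟨e u, hu.map e, ?_, e g, e h, ?_⟩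
  · rwa [← map_pow, map_ne_one_iff e e.injective]
  · rw [← map_commutatorElement, hgh, map_pow]

end Invariants

namespace Osc

def axis (t z : ℝ) : Osc := ⟨t, ⟨0, 0, z⟩⟩

def X : Osc := ⟨0, ⟨1, 0, 0⟩⟩

def Y : Osc := ⟨0, ⟨0, 1, 0⟩⟩

theorem commutatorElement_eq (g h : Osc) :
    ⁅g, h⁆ = ⟨0, g.v * alphaMap g.t h.v * alphaMap h.t g.v⁻¹ * h.v⁻¹⟩ := by
  refine Osc.ext (by simp [commutatorElement_def]) ?_
  simp only [commutatorElement_def, mul_v, mul_t, inv_v, inv_t, ← alphaMap_add,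
    show g.t + h.t + -g.t = h.t by ring, add_neg_cancel, alphaMap_zero]

@[simp] theorem commutatorElement_t (g h : Osc) : ⁅g, h⁆.t = 0 := by
  rw [commutatorElement_eq]

theorem pow_t (g : Osc) (n : ℕ) : (g ^ n).t = n * g.t := by
  induction n with
  | zero => simp
  | succ n ih => rw [pow_succ, mul_t, ih]; push_cast; ring

theorem axis_pow (t z : ℝ) (n : ℕ) : axis t z ^ n = axis (n * t) (n * z) := by
  induction n with
  | zero => ext <;> simp [axis]
  | succ n ih => rw [pow_succ, ih]; ext <;> simp [axis] <;> ring

theorem X_pow (n : ℕ) : X ^ n = ⟨0, ⟨n, 0, 0⟩⟩ := by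
  induction n with
  | zero => ext <;> simp
  | succ n ih => rw [pow_succ, ih]; ext <;> simp [X]

theorem commutatorElement_X_Y : ⁅X, Y⁆ = axis 0 1 := by
  rw [commutatorElement_eq]; ext <;> norm_num [X, Y, axis]

theorem axis_mem_center {t : ℝ} (hc : cos t = 1) (hs : sin t = 0) (z : ℝ) :
    axis t z ∈ Subgroup.center Osc :=
  Subgroup.mem_center_iff.mpr fun g => by ext <;> simp [axis, hc, hs, add_comm]

theorem eq_axis_of_commute {u : Osc} (hX : X * u = u * X) (hY : Y * u = u * Y) :
    cos u.t = 1 ∧ sin u.t = 0 ∧ u = axis u.t u.v.z := by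
  have hc : cos u.t = 1 := by simpa [X, add_comm, eq_comm] using congrArg (fun g : Osc => g.v.x) hX
  have hs : sin u.t = 0 := by simpa [X] using congrArg (fun g : Osc => g.v.y) hX
  have hy : u.v.y = 0 := by simpa [X, hc, hs, self_eq_neg] using congrArg (fun g : Osc => g.v.z) hX
  have hx : u.v.x = 0 := by simpa [Y, hc, hs, neg_eq_self] using congrArg (fun g : Osc => g.v.z) hY
  exact ⟨hc, hs, Osc.ext rfl (Heis.ext hx hy rfl)⟩

theorem commutatorElement_mem_center {g h : Osc} (hg : cos g.t = 1 ∧ sin g.t = 0)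
    (hh : cos h.t = 1 ∧ sin h.t = 0) : ⁅g, h⁆ ∈ Subgroup.center Osc := by
  convert axis_mem_center (by simp : cos 0 = 1) (by simp : sin 0 = 0) ⁅g, h⁆.v.z using 1
  rw [commutatorElement_eq]
  ext <;> simp [axis, hg, hh]

theorem commutatorElement_axis_X_pow_x (t : ℝ) (n : ℕ) :
    ⁅axis t 0 ^ n, X ^ n⁆.v.x = n * (cos (n * t) - 1) := by
  rw [axis_pow, X_pow, commutatorElement_eq]
  simp [axis, mul_add, sub_eq_add_neg]

end Osc

/-- `H₃(ℤ)`: the exponential coordinates of the integer matrices `[[1,a,c],[0,1,b],[0,0,1]]`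
are `(a, b, c - ab/2)`. -/
def Heis.integral : Subgroup Heis where
  carrier := {v | ∃ a b c : ℤ, v = ⟨a, b, c - a * b / 2⟩}
  one_mem' := ⟨0, 0, 0, by ext <;> simp⟩
  mul_mem' := by
    rintro _ _ ⟨a, b, c, rfl⟩ ⟨a', b', c', rfl⟩
    exact ⟨a + a', b + b', c + c' + a * b', by ext <;> simp; ring⟩
  inv_mem' := by
    rintro _ ⟨a, b, c, rfl⟩
    exact ⟨-a, -b, a * b - c, by ext <;> simp; ring⟩

theorem Heis.alphaMap_mem_integral (n : ℤ) {v : Heis} (hv : v ∈ integral) :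
    alphaMap (π / 2 * n) v ∈ integral := by
  have quarter_turn {s : ℝ} (hs : s = π / 2 ∨ s = -(π / 2)) {w : Heis} (hw : w ∈ integral) :
      alphaMap s w ∈ integral := by
    obtain ⟨a, b, c, rfl⟩ := hw
    rcases hs with rfl | rfl
    · exact ⟨b, -a, c - a * b, by ext <;> simp; ring⟩
    · exact ⟨-b, a, c - a * b, by ext <;> simp; ring⟩
  induction n using Int.induction_on with
  | zero => simpa [Osc.alphaMap_zero] using hv
  | succ n ih =>
    rw [show π / 2 * ((n + 1 : ℤ) : ℝ) = π / 2 + π / 2 * n by push_cast; ring, Osc.alphaMap_add]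
    exact quarter_turn (.inl rfl) ih
  | pred n ih =>
    rw [show π / 2 * ((-n - 1 : ℤ) : ℝ) = -(π / 2) + π / 2 * (-n : ℤ) by push_cast; ring,
      Osc.alphaMap_add]
    exact quarter_turn (.inr rfl) ih

/-- `(π/2)ℤ ⋉ H₃(ℤ)` -/
def Osc.integral : Subgroup Osc where
  carrier := {g | (∃ n : ℤ, g.t = π / 2 * n) ∧ g.v ∈ Heis.integral}
  one_mem' := ⟨⟨0, by simp⟩, one_mem _⟩
  mul_mem' := by
    rintro g h ⟨⟨n, hn⟩, hg⟩ ⟨⟨n', hn'⟩, hh⟩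
    refine ⟨⟨n + n', by simp [hn, hn']; ring⟩, mul_mem hg ?_⟩
    exact hn ▸ Heis.alphaMap_mem_integral n hh
  inv_mem' := by
    rintro g ⟨⟨n, hn⟩, hg⟩
    refine ⟨⟨-n, by simp [hn]⟩, ?_⟩
    simpa [hn] using Heis.alphaMap_mem_integral (-n) (inv_mem hg)

theorem Osc.exists_z_eq_intCast_of_mem_integral {g : Osc} (hg : g ∈ integral) (hx : g.v.x = 0) :
    ∃ n : ℤ, g.v.z = n := by
  obtain ⟨-, a, b, c, hv⟩ := hg
  refine ⟨c, ?_⟩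
  simp only [hv, Int.cast_eq_zero] at hx ⊢
  simp [hx]

namespace LamTheta

open Osc

variable {k : ℕ+} {θ : ℝ} {m : ℤ} {hθ : θ = π / 2 * m}

theorem X_mem : X ∈ LamTheta k θ m hθ :=
  ⟨⟨0, by simp [X]⟩, ⟨1, by simp [X]⟩, ⟨0, by simp [X]⟩, ⟨0, by simp [X]⟩⟩

theorem Y_mem : Y ∈ LamTheta k θ m hθ :=
  ⟨⟨0, by simp [Y]⟩, ⟨0, by simp [Y]⟩, ⟨1, by simp [Y]⟩, ⟨0, by simp [Y]⟩⟩

theorem axis_zero_mem (c : ℤ) : axis 0 (c / (2 * k)) ∈ LamTheta k θ m hθ :=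
  ⟨⟨0, by simp [axis]⟩, ⟨0, by simp [axis]⟩, ⟨0, by simp [axis]⟩, ⟨c, rfl⟩⟩

theorem axis_mem : axis θ 0 ∈ LamTheta k θ m hθ :=
  ⟨⟨1, by simp [axis]⟩, ⟨0, by simp [axis]⟩, ⟨0, by simp [axis]⟩, ⟨0, by simp [axis]⟩⟩

theorem exists_eq_axis_of_mem_center {u : LamTheta k θ m hθ} (hu : u ∈ Subgroup.center _) :
    ∃ (t : ℝ) (c : ℤ), cos t = 1 ∧ sin t = 0 ∧ (u : Osc) = axis t (c / (2 * k)) := by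
  obtain ⟨hcos, hsin, hu_eq⟩ :=
    eq_axis_of_commute (congrArg Subtype.val (Subgroup.mem_center_iff.mp hu ⟨X, X_mem⟩))
      (congrArg Subtype.val (Subgroup.mem_center_iff.mp hu ⟨Y, Y_mem⟩))
  obtain ⟨-, -, -, c, hc⟩ := u.2
  exact ⟨_, c, hcos, hsin, hc ▸ hu_eq⟩

theorem exists_mul_axis_mem_integral {g : Osc} (hg : g ∈ LamTheta k θ m hθ) :
    ∃ s, g * axis 0 s ∈ Osc.integral := by
  obtain ⟨⟨n, hn⟩, ⟨a, ha⟩, ⟨b, hb⟩, -⟩ := hg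
  refine ⟨-g.v.z - a * b / 2, ⟨m * n, by simp only [axis, mul_t, add_zero, hn, hθ, Int.cast_mul]; ring⟩, a, b, 0, ?_⟩
  ext <;> simp [axis, ha, hb]
  ring

theorem exists_commutatorElement_z_eq_intCast {g h : Osc} (hg : g ∈ LamTheta k θ m hθ)
    (hh : h ∈ LamTheta k θ m hθ) (hx : ⁅g, h⁆.v.x = 0) : ∃ n : ℤ, ⁅g, h⁆.v.z = n := by
  obtain ⟨s, hs⟩ := exists_mul_axis_mem_integral hg
  obtain ⟨s', hs'⟩ := exists_mul_axis_mem_integral hh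
  have hcomm : ⁅g * axis 0 s, h * axis 0 s'⁆ = ⁅g, h⁆ :=
    commutatorElement_mul_mul_of_mem_center g h (axis_mem_center (by simp) (by simp) s)
      (axis_mem_center (by simp) (by simp) s')
  rw [← hcomm] at hx ⊢
  refine exists_z_eq_intCast_of_mem_integral ?_ hx
  rw [commutatorElement_def]
  exact mul_mem (mul_mem (mul_mem hs hs') (inv_mem hs)) (inv_mem hs')

theorem powCommutatorsCentral_iff {n : ℕ} (hn : n ≠ 0) :
    PowCommutatorsCentral (LamTheta k θ m hθ) n ↔ cos (n * θ) = 1 := by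
  constructor
  · intro hP
    obtain ⟨_, _, -, -, hu⟩ := exists_eq_axis_of_mem_center (hP ⟨axis θ 0, axis_mem⟩ ⟨X, X_mem⟩)
    have hx := congrArg (fun g : Osc => g.v.x) hu
    simp only [Subgroup.coe_commutatorElement, SubmonoidClass.coe_pow,
      commutatorElement_axis_X_pow_x] at hx
    simpa [axis, hn, sub_eq_zero] using hx
  · intro hcos g h
    apply Subgroup.mem_center_of_mem_center
    obtain ⟨j, hj⟩ := Real.cos_eq_one_iff _ |>.mp hcos
    have hpow (g : LamTheta k θ m hθ) : cos ((g ^ n : LamTheta k θ m hθ) : Osc).t = 1 ∧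
        sin ((g ^ n : LamTheta k θ m hθ) : Osc).t = 0 := by
      obtain ⟨⟨a, ha⟩, -⟩ := g.2
      have : ((g ^ n : LamTheta k θ m hθ) : Osc).t = (a * j : ℤ) * (2 * π) := by
        rw [SubmonoidClass.coe_pow, pow_t, ha]; push_cast; linear_combination a * hj.symm
      have hcos := this ▸ Real.cos_int_mul_two_pi (a * j)
      exact ⟨hcos, Real.sin_eq_zero_iff_cos_eq.mpr (.inl hcos)⟩
    exact commutatorElement_mem_center (hpow g) (hpow h)

theorem hasPrimitiveCentralPowCommutator :
    HasPrimitiveCentralPowCommutator (LamTheta k θ m hθ) (2 * k) := by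
  set u : LamTheta k θ m hθ := ⟨axis 0 ((1 : ℤ) / (2 * k)), axis_zero_mem 1⟩
  have hu : u ∈ Subgroup.center _ :=
    Subgroup.mem_center_of_mem_center (axis_mem_center (by simp) (by simp) _)
  have hpow : ((u ^ (2 * (k : ℕ)) : LamTheta k θ m hθ) : Osc) = axis 0 1 := by
    rw [SubmonoidClass.coe_pow, axis_pow]
    ext <;> simp [axis]
    field_simp
  refine ⟨u, ⟨hu, fun w hw n hn hwn => ?_⟩, fun h => ?_, ⟨X, X_mem⟩, ⟨Y, Y_mem⟩, ?_⟩
  · obtain ⟨t, c, -, -, hw⟩ := exists_eq_axis_of_mem_center hw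
    have hz := congrArg (fun g : Osc => g.v.z) (congrArg Subtype.val hwn)
    have hnc : (n : ℤ) * c = 1 := by
      rw [SubmonoidClass.coe_pow, hw, axis_pow] at hz
      simp only [axis, u] at hz
      field_simp at hz
      exact_mod_cast hz
    have := Int.eq_one_of_mul_eq_one_right (by positivity) hnc
    omega
  · have hz := congrArg (fun g : Osc => g.v.z) (hpow.symm.trans (congrArg Subtype.val h))
    simp [axis] at hz
  · exact Subtype.ext (commutatorElement_X_Y.trans hpow.symm)

theorem natAbs_eq_one_of_isPrimitiveCentral {u : LamTheta k θ m hθ} (hu : IsPrimitiveCentral u)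
    (hne : u ≠ 1) {c : ℤ} (hu_eq : (u : Osc) = axis 0 (c / (2 * k))) : c.natAbs = 1 := by
  have hc0 : c ≠ 0 := by
    rintro rfl
    exact hne (Subtype.ext (by rw [hu_eq]; ext <;> simp [axis]))
  by_contra hc1
  refine hu.2 ⟨axis 0 (c.sign / (2 * k)), axis_zero_mem _⟩
    (Subgroup.mem_center_of_mem_center (axis_mem_center (by simp) (by simp) _)) c.natAbs
    (by omega) (Subtype.ext ?_)
  rw [SubmonoidClass.coe_pow, axis_pow, hu_eq, mul_zero, mul_div_assoc', ← Int.cast_natCast,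
    ← Int.cast_mul, mul_comm, Int.sign_mul_natAbs]

theorem two_mul_dvd_of_hasPrimitiveCentralPowCommutator {N : ℕ}
    (hN : HasPrimitiveCentralPowCommutator (LamTheta k θ m hθ) N) : 2 * (k : ℕ) ∣ N := by
  obtain ⟨u, hu, hne, g, h, hgh⟩ := hN
  obtain ⟨t, c, -, -, hu_eq⟩ := exists_eq_axis_of_mem_center hu.1
  have hN0 : N ≠ 0 := by rintro rfl; exact hne (pow_zero u)
  have hgh' : ⁅(g : Osc), (h : Osc)⁆ = axis (N * t) (N * (c / (2 * k))) := by
    rw [← Subgroup.coe_commutatorElement, hgh, SubmonoidClass.coe_pow, hu_eq, axis_pow]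
  have ht : t = 0 := by simpa [axis, hN0] using congrArg Osc.t hgh'
  subst ht
  have hc1 := natAbs_eq_one_of_isPrimitiveCentral hu (fun h1 => hne (by rw [h1, one_pow])) hu_eq
  obtain ⟨n, hn⟩ := exists_commutatorElement_z_eq_intCast g.2 h.2 (by simp [hgh', axis])
  have hNc : (2 * k * n : ℤ) = N * c := by
    rw [hgh'] at hn
    simp only [axis] at hn
    field_simp at hn
    exact_mod_cast hn.symm
  simpa [Int.natAbs_mul, hc1] using Int.natAbs_dvd_natAbs.mpr ⟨n, hNc.symm⟩

theorem eq_of_mulEquiv {p : ℕ+} {θ' : ℝ} {m' : ℤ} {hθ' : θ' = π / 2 * m'}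
    (e : LamTheta k θ m hθ ≃* LamTheta p θ' m' hθ') : k = p := by
  have hkp := two_mul_dvd_of_hasPrimitiveCentralPowCommutator
    (hasPrimitiveCentralPowCommutator.of_mulEquiv e.symm)
  have hpk := two_mul_dvd_of_hasPrimitiveCentralPowCommutator
    (hasPrimitiveCentralPowCommutator.of_mulEquiv e)
  exact PNat.coe_injective (Nat.dvd_antisymm (Nat.dvd_of_mul_dvd_mul_left two_pos hkp)
    (Nat.dvd_of_mul_dvd_mul_left two_pos hpk))

end LamTheta

theorem exists_lamTheta_eq (i : Fin 3) : ∃ (m : ℤ) (hθ : ![2 * π, π, π / 2] i = π / 2 * m),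
    ∀ k, ![Lam0 k, LamPi k, LamPi2 k] i = LamTheta k _ m hθ := by
  fin_cases i
  exacts [⟨4, by simp; ring, fun _ => rfl⟩, ⟨2, by simp, fun _ => rfl⟩, ⟨1, by simp, fun _ => rfl⟩]

theorem level_eq_of_mulEquiv {k p : ℕ+} {i j : Fin 3}
    (e : ![Lam0 k, LamPi k, LamPi2 k] i ≃* ![Lam0 p, LamPi p, LamPi2 p] j) : k = p := by
  obtain ⟨m, hθ, hi⟩ := exists_lamTheta_eq i
  obtain ⟨m', hθ', hj⟩ := exists_lamTheta_eq j
  exact LamTheta.eq_of_mulEquiv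
    ((MulEquiv.subgroupCongr (hi k)).symm.trans (e.trans (MulEquiv.subgroupCongr (hj p))))

theorem powCommutatorsCentral_lam_iff (k : ℕ+) (i : Fin 3) {n : ℕ} (hn : n ≠ 0) :
    PowCommutatorsCentral (![Lam0 k, LamPi k, LamPi2 k] i) n ↔
      cos (n * ![2 * π, π, π / 2] i) = 1 := by
  obtain ⟨m, hθ, hi⟩ := exists_lamTheta_eq i
  rw [hi k]
  exact LamTheta.powCommutatorsCentral_iff hn

theorem index_eq_of_mulEquiv {k : ℕ+} {i j : Fin 3}
    (e : ![Lam0 k, LamPi k, LamPi2 k] i ≃* ![Lam0 k, LamPi k, LamPi2 k] j) : i = j := by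
  have hcos {n : ℕ} (hn : n ≠ 0) :
      cos (n * ![2 * π, π, π / 2] i) = 1 ↔ cos (n * ![2 * π, π, π / 2] j) = 1 := by
    rw [← powCommutatorsCentral_lam_iff k i hn, ← powCommutatorsCentral_lam_iff k j hn]
    exact powCommutatorsCentral_congr e n
  have h₁ := hcos one_ne_zero
  have h₂ := hcos two_ne_zero
  revert h₁ h₂
  fin_cases i <;> fin_cases j <;> norm_num [mul_div_cancel₀]

/-- The groups `Λ_{k,i}`, for `k` a positive integer and `i ∈ {0, π, π/2}`
(indexed here by `i : Fin 3`, with `0 ↦ Λ_{k,0}`, `1 ↦ Λ_{k,π}`, `2 ↦ Λ_{k,π/2}`), are pairwise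
non-isomorphic. -/
theorem statement10 (k p : ℕ+) (i j : Fin 3) (h : (k, i) ≠ (p, j)) :
    IsEmpty ((![Lam0 k, LamPi k, LamPi2 k] i : Subgroup Osc) ≃*
      (![Lam0 p, LamPi p, LamPi2 p] j : Subgroup Osc)) := by
  refine ⟨fun e => h ?_⟩
  obtain rfl := level_eq_of_mulEquiv e
  rw [index_eq_of_mulEquiv e]
end

section
/- Let l and k be positive integers and let q, r be positive real numbers. Then L = 2πlℤ × qℤ × rℤ × (qr/(2k))ℤ is a subgroup of the oscillator group G, and the map γ₁ : Λ_{k,0} → L defined by γ₁(t,x,y,z) = (l·t, q·x, r·y, qr·z) is a group isomorphism. -/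
open Real

/-! Elements of `Λ_{k,0}` have time component in `2πℤ`, where `α` is trivial, so on them the
multiplication of `G` is that of the direct product `ℝ × H₃(ℝ)`. There `γ₁` is the product of
`t ↦ l t` with the homomorphism `(x, y, z) ↦ (q x, r y, q r z)` of `H₃(ℝ)`, hence an injective
homomorphism, and `L` is its image, hence a subgroup. -/

namespace Heis

noncomputable def scale (q r : ℝ) : Heis →* Heis where
  toFun v := ⟨q * v.x, r * v.y, q * r * v.z⟩
  map_one' := by ext <;> simp
  map_mul' v w := by ext <;> simp <;> ring

@[simp] lemma scale_x (q r : ℝ) (v : Heis) : (scale q r v).x = q * v.x := rfl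
@[simp] lemma scale_y (q r : ℝ) (v : Heis) : (scale q r v).y = r * v.y := rfl
@[simp] lemma scale_z (q r : ℝ) (v : Heis) : (scale q r v).z = q * r * v.z := rfl

lemma scale_injective {q r : ℝ} (hq : q ≠ 0) (hr : r ≠ 0) : Function.Injective (scale q r) := by
  intro v w h
  have hx := congrArg Heis.x h
  have hy := congrArg Heis.y h
  have hz := congrArg Heis.z h
  simp only [scale_x, scale_y, scale_z] at hx hy hz
  ext
  · exact mul_left_cancel₀ hq hx
  · exact mul_left_cancel₀ hr hy
  · exact mul_left_cancel₀ (mul_ne_zero hq hr) hz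

end Heis

lemma alphaMap_natCast_mul_of_forall_eq {t : ℝ} (ht : ∀ v, alphaMap t v = v) (n : ℕ) (v : Heis) :
    alphaMap (n * t) v = v := by
  induction n with
  | zero => simpa using Osc.alphaMap_zero v
  | succ n ih => rw [Nat.cast_succ, add_one_mul, Osc.alphaMap_add, ht, ih]

lemma alphaMap_two_pi_mul_intCast (n : ℤ) (v : Heis) : alphaMap (2 * π * n) v = v := by
  have hcos : cos (2 * π * n) = 1 := cos_eq_one_iff _ |>.2 ⟨n, by ring⟩
  have hsin : sin (2 * π * n) = 0 := sin_eq_zero_iff.2 ⟨2 * n, by push_cast; ring⟩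
  ext <;> simp [hcos, hsin]

namespace Osc

def untwisted : Subgroup Osc where
  carrier := {g | ∀ v, alphaMap g.t v = v}
  one_mem' := Osc.alphaMap_zero
  mul_mem' {g h} hg hh v := by
    rw [Osc.mul_t, Osc.alphaMap_add, hh, hg]
  inv_mem' {g} hg v :=
    calc alphaMap (-g.t) v = alphaMap (-g.t) (alphaMap g.t v) := by rw [hg]
      _ = v := by rw [← Osc.alphaMap_add, neg_add_cancel, Osc.alphaMap_zero]

noncomputable def untwistedScale (n : ℕ) (q r : ℝ) : untwisted →* Osc where
  toFun g := ⟨n * (g : Osc).t, Heis.scale q r (g : Osc).v⟩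
  map_one' := by ext <;> simp
  map_mul' g h := by
    have hg : ∀ v, alphaMap (n * (g : Osc).t) v = v :=
      alphaMap_natCast_mul_of_forall_eq g.2 n
    refine Osc.ext (by simp [mul_add]) ?_
    simp only [Subgroup.coe_mul, Osc.mul_v, hg, g.2 (h : Osc).v, map_mul]

lemma untwistedScale_injective {n : ℕ} {q r : ℝ} (hn : n ≠ 0) (hq : q ≠ 0) (hr : r ≠ 0) :
    Function.Injective (untwistedScale n q r) := by
  intro g h hgh
  have ht := congrArg Osc.t hgh
  have hv := congrArg Osc.v hgh
  exact Subtype.ext (Osc.ext (mul_left_cancel₀ (Nat.cast_ne_zero.2 hn) ht)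
    (Heis.scale_injective hq hr hv))

end Osc

lemma mem_Lam0 {k : ℕ+} {g : Osc} :
    g ∈ Lam0 k ↔ (∃ n : ℤ, g.t = 2 * π * n) ∧ (∃ a : ℤ, g.v.x = a) ∧ (∃ b : ℤ, g.v.y = b) ∧
      (∃ c : ℤ, g.v.z = c / (2 * ((k : ℕ) : ℝ))) := Iff.rfl

lemma Lam0_le_untwisted (k : ℕ+) : Lam0 k ≤ Osc.untwisted := by
  rintro g ⟨⟨n, hn⟩, -⟩ v
  rw [hn, alphaMap_two_pi_mul_intCast]

noncomputable def gamma1 (l k : ℕ+) (q r : ℝ) : Lam0 k →* Osc :=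
  (Osc.untwistedScale l q r).comp (Subgroup.inclusion (Lam0_le_untwisted k))

lemma gamma1_apply (l k : ℕ+) (q r : ℝ) (g : Lam0 k) :
    gamma1 l k q r g = ⟨((l : ℕ) : ℝ) * (g : Osc).t, Heis.scale q r (g : Osc).v⟩ := rfl

lemma coe_range_gamma1 (l k : ℕ+) (q r : ℝ) :
    ((gamma1 l k q r).range : Set Osc) =
      prodSet (2 * π * ((l : ℕ) : ℝ)) q r (q * r / (2 * ((k : ℕ) : ℝ))) := by
  ext s
  constructor
  · rintro ⟨g, rfl⟩
    obtain ⟨⟨n, hn⟩, ⟨a, ha⟩, ⟨b, hb⟩, ⟨c, hc⟩⟩ := mem_Lam0.1 g.2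
    refine ⟨⟨n, ?_⟩, ⟨a, ?_⟩, ⟨b, ?_⟩, ⟨c, ?_⟩⟩ <;>
      simp only [gamma1_apply, Heis.scale_x, Heis.scale_y, Heis.scale_z, hn, ha, hb, hc] <;> ring
  · rintro ⟨⟨n, hn⟩, ⟨a, ha⟩, ⟨b, hb⟩, ⟨c, hc⟩⟩
    refine ⟨⟨⟨2 * π * n, ⟨a, b, c / (2 * ((k : ℕ) : ℝ))⟩⟩,
      ⟨⟨n, rfl⟩, ⟨a, rfl⟩, ⟨b, rfl⟩, ⟨c, rfl⟩⟩⟩, ?_⟩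
    ext <;>
      simp only [gamma1_apply, Heis.scale_x, Heis.scale_y, Heis.scale_z, hn, ha, hb, hc] <;> ring

lemma gamma1_injective (l k : ℕ+) {q r : ℝ} (hq : q ≠ 0) (hr : r ≠ 0) :
    Function.Injective (gamma1 l k q r) :=
  (Osc.untwistedScale_injective l.ne_zero hq hr).comp (Subgroup.inclusion_injective _)

/-- For positive integers `l, k` and positive reals `q, r`, the set
`L = 2πlℤ × qℤ × rℤ × (qr/(2k))ℤ` is a subgroup of the oscillator group, and
`γ₁(t,x,y,z) = (lt, qx, ry, qrz)` is a group isomorphism `Λ_{k,0} → L`. -/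
theorem statement13 (l k : ℕ+) (q r : ℝ) (hq : 0 < q) (hr : 0 < r) :
    ∃ S : Subgroup Osc,
      (S : Set Osc) = prodSet (2 * π * ((l : ℕ) : ℝ)) q r (q * r / (2 * ((k : ℕ) : ℝ))) ∧
      ∃ φ : Lam0 k ≃* S, ∀ g : Lam0 k,
        (↑(φ g) : Osc) = ⟨((l : ℕ) : ℝ) * (g : Osc).t,
          ⟨q * (g : Osc).v.x, r * (g : Osc).v.y, q * r * (g : Osc).v.z⟩⟩ :=
  ⟨(gamma1 l k q r).range, coe_range_gamma1 l k q r,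
    MonoidHom.ofInjective (gamma1_injective l k hq.ne' hr.ne'), fun _ => rfl⟩
end
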